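/- arXiv:1409.2579 — 4 statements merged into one kernel-verified Lean document; each statement's English description precedes it below -/
import Mathlib

section
/- If x₁,…,xₙ ∈ ℝ^d (d ≥ n) are linearly independent and partitioned into c nonempty classes, then the within-class scatter matrix S_W has rank n − c. -/
open Matrix Finset

/-- The mean of class `j`. -/
noncomputable def classMean {d n c : ℕ} (x : Fin n → Fin d → ℝ) (g : Fin n → Fin c)
    (j : Fin c) : Fin d → ℝ :=
  (((Finset.univ.filter (fun i => g i = j)).card : ℝ))⁻¹ •
    ∑ i ∈ Finset.univ.filter (fun i => g i = j), x i

/-- The global mean of the training samples. -/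
noncomputable def globalMean {d n : ℕ} (x : Fin n → Fin d → ℝ) : Fin d → ℝ :=
  (n : ℝ)⁻¹ • ∑ i, x i

/-- The within-class scatter matrix. -/
noncomputable def withinScatter {d n c : ℕ} (x : Fin n → Fin d → ℝ) (g : Fin n → Fin c) :
    Matrix (Fin d) (Fin d) ℝ :=
  ∑ j, ∑ i ∈ Finset.univ.filter (fun i => g i = j),
    vecMulVec (x i - classMean x g j) (x i - classMean x g j)

/-- The between-class scatter matrix. -/
noncomputable def betweenScatter {d n c : ℕ} (x : Fin n → Fin d → ℝ) (g : Fin n → Fin c) :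
    Matrix (Fin d) (Fin d) ℝ :=
  ∑ j, (((Finset.univ.filter (fun i => g i = j)).card : ℝ)) •
    vecMulVec (classMean x g j - globalMean x) (classMean x g j - globalMean x)

/-- The total scatter matrix. -/
noncomputable def totalScatter {d n : ℕ} (x : Fin n → Fin d → ℝ) :
    Matrix (Fin d) (Fin d) ℝ :=
  ∑ i, vecMulVec (x i - globalMean x) (x i - globalMean x)

/-! With `yᵢ = xᵢ - μ_{g i}` we have `S_W = ∑ yᵢ yᵢᵀ = Yᵀ Y`, so `rank S_W = rank Y`. The centered
samples factor as `Yᵀ = X (1 - B T)`, where `X` has columns `xᵢ`, `T` is the `c × n` class-indicator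
matrix and `B` averages within classes; `T B = 1` because the classes are nonempty. As the columns
of `X` are independent, `rank Y = rank (1 - B T)`, and `1 - B T` maps onto `ker T`, which has
dimension `n - c` since `T` is onto. -/

namespace LinearMap

variable {R M N : Type*} [Ring R] [AddCommGroup M] [AddCommGroup N] [Module R M] [Module R N]

theorem range_id_sub_comp_eq_ker {f : M →ₗ[R] N} {s : N →ₗ[R] M} (h : f ∘ₗ s = id) :
    range (id - s ∘ₗ f) = ker f := by
  ext v
  constructor
  · rintro ⟨w, rfl⟩
    simp [← comp_apply f s, h]
  · intro hv
    exact ⟨v, by simp [mem_ker.mp hv]⟩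

end LinearMap

namespace Matrix

variable {K : Type*} [Field K] {l m n : Type*}

theorem rank_mul_eq_right_of_mulVec_injective [Fintype m] [Fintype n]
    (A : Matrix l m K) (B : Matrix m n K) (hA : Function.Injective A.mulVec) :
    (A * B).rank = B.rank := by
  rw [rank, rank, mulVecLin_mul, LinearMap.range_comp,
    ← (Submodule.equivMapOfInjective A.mulVecLin hA _).finrank_eq]

theorem rank_one_sub_mul_of_mul_eq_one [Fintype m] [Fintype n] [DecidableEq m] [DecidableEq n]
    {T : Matrix m n K} {B : Matrix n m K} (h : T * B = 1) :
    (1 - B * T).rank = Fintype.card n - Fintype.card m := by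
  have hTB : T.mulVecLin ∘ₗ B.mulVecLin = LinearMap.id := by
    rw [← mulVecLin_mul, h, mulVecLin_one]
  have hrange : LinearMap.range T.mulVecLin = ⊤ :=
    LinearMap.range_eq_top.mpr fun w => ⟨B.mulVecLin w, by rw [← LinearMap.comp_apply, hTB]; rfl⟩
  have hrn := LinearMap.finrank_range_add_finrank_ker T.mulVecLin
  rw [hrange, finrank_top, Module.finrank_fintype_fun_eq_card,
    Module.finrank_fintype_fun_eq_card] at hrn
  have hsub : (1 - B * T).mulVecLin = LinearMap.id - B.mulVecLin ∘ₗ T.mulVecLin := by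
    ext v : 1
    simp
  rw [rank, hsub, LinearMap.range_id_sub_comp_eq_ker hTB]
  omega

theorem sum_vecMulVec_self_eq_transpose_mul {α ι : Type*} [NonUnitalNonAssocSemiring α]
    [Fintype ι] (v : ι → n → α) :
    ∑ i, vecMulVec (v i) (v i) = (of v)ᵀ * of v := by
  ext a b
  simp [mul_apply, vecMulVec_apply, sum_apply]

end Matrix

section ClassMatrices

variable {ι κ : Type*} [DecidableEq κ]

def classIndicator (g : ι → κ) : Matrix κ ι ℝ :=
  of fun j i => if g i = j then 1 else 0

noncomputable def classAveraging [Fintype ι] (g : ι → κ) : Matrix ι κ ℝ :=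
  of fun i j => if g i = j then ((univ.filter fun k => g k = j).card : ℝ)⁻¹ else 0

theorem classIndicator_mul_classAveraging [Fintype ι] {g : ι → κ} (hg : Function.Surjective g) :
    classIndicator g * classAveraging g = 1 := by
  ext j j'
  simp only [classIndicator, classAveraging, mul_apply, of_apply, ite_mul, one_mul, zero_mul]
  rw [← Finset.sum_filter]
  obtain rfl | hjj' := eq_or_ne j j'
  · obtain ⟨i, rfl⟩ := hg j
    have hcard : (#{k | g k = g i} : ℝ) ≠ 0 :=
      Nat.cast_ne_zero.mpr (Finset.card_ne_zero.mpr ⟨i, by simp⟩)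
    simp [Finset.sum_ite_of_true, hcard]
  · rw [one_apply_ne hjj']
    exact Finset.sum_eq_zero fun i hi => if_neg ((Finset.mem_filter.mp hi).2 ▸ hjj')

theorem mul_classIndicator {l : Type*} [Fintype κ] (M : Matrix l κ ℝ) (g : ι → κ) :
    M * classIndicator g = M.submatrix id g := by
  ext a i
  simp [classIndicator, mul_apply]

end ClassMatrices

theorem transpose_mul_classAveraging {d n c : ℕ} (x : Fin n → Fin d → ℝ) (g : Fin n → Fin c) :
    (of x)ᵀ * classAveraging g = (of (classMean x g))ᵀ := by
  ext a j
  simp only [classAveraging, classMean, mul_apply, transpose_apply, of_apply, mul_ite, mul_zero,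
    Pi.smul_apply, Finset.sum_apply, smul_eq_mul, Finset.mul_sum, ← Finset.sum_filter]
  exact Finset.sum_congr rfl fun i _ => mul_comm _ _

theorem transpose_of_sub_classMean_eq_mul {d n c : ℕ} (x : Fin n → Fin d → ℝ)
    (g : Fin n → Fin c) :
    (of fun i => x i - classMean x g (g i))ᵀ =
      (of x)ᵀ * (1 - classAveraging g * classIndicator g) := by
  rw [Matrix.mul_sub, Matrix.mul_one, ← Matrix.mul_assoc, transpose_mul_classAveraging,
    mul_classIndicator]
  rfl

theorem withinScatter_eq_sum_vecMulVec {d n c : ℕ} (x : Fin n → Fin d → ℝ) (g : Fin n → Fin c) :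
    withinScatter x g =
      ∑ i, vecMulVec (x i - classMean x g (g i)) (x i - classMean x g (g i)) := by
  rw [withinScatter, ← Finset.sum_fiberwise Finset.univ g]
  refine Finset.sum_congr rfl fun j _ => Finset.sum_congr rfl fun i hi => ?_
  rw [(Finset.mem_filter.mp hi).2]

theorem stmt9_general {d n c : ℕ} (x : Fin n → Fin d → ℝ) (g : Fin n → Fin c)
    (hli : LinearIndependent ℝ x)
    (hsurj : Function.Surjective g) :
    (withinScatter x g).rank = n - c := by
  have hinj : Function.Injective (of x)ᵀ.mulVec := mulVec_injective_iff.mpr hli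
  rw [withinScatter_eq_sum_vecMulVec, sum_vecMulVec_self_eq_transpose_mul, rank_transpose_mul_self,
    ← rank_transpose, transpose_of_sub_classMean_eq_mul,
    rank_mul_eq_right_of_mulVec_injective _ _ hinj,
    rank_one_sub_mul_of_mul_eq_one (classIndicator_mul_classAveraging hsurj)]
  simp

theorem stmt9 {d n c : ℕ} (hdn : n ≤ d) (x : Fin n → Fin d → ℝ) (g : Fin n → Fin c)
    (hli : LinearIndependent ℝ x)
    (hsurj : Function.Surjective g) :
    (withinScatter x g).rank = n - c :=
  stmt9_general x g hli hsurj
end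

section
/- Let S_W, S_B be symmetric PSD matrices with S_T = S_W + S_B, and let W be a matrix such that S_T† S_B W = W and W has full column rank. Then S_W W = 0 and S_B W ≠ 0. -/
/-! For positive semidefinite `A`, `B`, every kernel vector of `A + B` is a kernel vector of `B`,
since `x⋆ (A + B) x = 0` forces `x⋆ B x = 0`. Applied to the columns of `1 - S_T S_T†` this gives
`S_B = S_T S_T† S_B`, so `S_T W = S_T S_T† S_B W = S_B W`, i.e. `S_W W = 0`. If `S_B W = 0`, then
`W = S_T† S_B W = 0`, which contradicts `rank W = h ≥ 1`. -/

open Matrix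

/-- The four Penrose conditions characterizing the Moore-Penrose pseudoinverse. -/
def IsMoorePenrose {d : ℕ} (A P : Matrix (Fin d) (Fin d) ℝ) : Prop :=
  A * P * A = A ∧ P * A * P = P ∧ (A * P)ᵀ = A * P ∧ (P * A)ᵀ = P * A

namespace Matrix

open scoped ComplexOrder

variable {n m 𝕜 : Type*} [Fintype n] [RCLike 𝕜]

theorem PosSemidef.mulVec_eq_zero_of_add_mulVec_eq_zero {A B : Matrix n n 𝕜}
    (hA : A.PosSemidef) (hB : B.PosSemidef) {x : n → 𝕜} (hx : (A + B) *ᵥ x = 0) :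
    B *ᵥ x = 0 := by
  have hsum : star x ⬝ᵥ A *ᵥ x + star x ⬝ᵥ B *ᵥ x = 0 := by
    rw [← dotProduct_add, ← add_mulVec, hx, dotProduct_zero]
  rw [← hB.dotProduct_mulVec_zero_iff]
  exact ((add_eq_zero_iff_of_nonneg (hA.dotProduct_mulVec_nonneg x)
    (hB.dotProduct_mulVec_nonneg x)).mp hsum).2

theorem PosSemidef.mul_eq_zero_of_add_mul_eq_zero [Fintype m] {A B : Matrix n n 𝕜}
    (hA : A.PosSemidef) (hB : B.PosSemidef) {M : Matrix n m 𝕜} (hM : (A + B) * M = 0) :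
    B * M = 0 :=
  ext_iff_mulVec.mpr fun v => by
    rw [zero_mulVec, ← mulVec_mulVec]
    refine hA.mulVec_eq_zero_of_add_mulVec_eq_zero hB ?_
    rw [mulVec_mulVec, hM, zero_mulVec]

end Matrix

theorem IsMoorePenrose.mul_mul_eq_self {d : ℕ} {A P : Matrix (Fin d) (Fin d) ℝ}
    (hP : IsMoorePenrose A P) (hA : Aᵀ = A) : A * (A * P) = A := by
  obtain ⟨hAPA, -, hAP, -⟩ := hP
  calc A * (A * P) = A * (A * P)ᵀ := by rw [hAP]
    _ = (A * P * A)ᵀ := by simp only [transpose_mul, hA, Matrix.mul_assoc]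
    _ = A := by rw [hAPA, hA]

theorem IsMoorePenrose.add_mul_mul_eq_right {d : ℕ} {A B P : Matrix (Fin d) (Fin d) ℝ}
    (hA : A.PosSemidef) (hB : B.PosSemidef) (hP : IsMoorePenrose (A + B) P) :
    (A + B) * P * B = B := by
  have hsymm : ∀ {S : Matrix (Fin d) (Fin d) ℝ}, S.PosSemidef → Sᵀ = S :=
    fun hS => (isHermitian_iff_isSymm.mp hS.isHermitian).eq
  have hker : (A + B) * (1 - (A + B) * P) = 0 := by
    rw [Matrix.mul_sub, Matrix.mul_one, hP.mul_mul_eq_self (hsymm (hA.add hB)), sub_self]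
  have hBAP : B * ((A + B) * P) = B := by
    have := hA.mul_eq_zero_of_add_mul_eq_zero hB hker
    rwa [Matrix.mul_sub, Matrix.mul_one, sub_eq_zero, eq_comm] at this
  calc (A + B) * P * B = (B * ((A + B) * P))ᵀ := by
        rw [transpose_mul, hP.2.2.1, hsymm hB]
    _ = B := by rw [hBAP, hsymm hB]

theorem stmt11 {d h : ℕ} (hh : 1 ≤ h)
    (SW SB : Matrix (Fin d) (Fin d) ℝ)
    (hSW : SW.PosSemidef) (hSB : SB.PosSemidef)
    (P : Matrix (Fin d) (Fin d) ℝ) (hP : IsMoorePenrose (SW + SB) P)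
    (W : Matrix (Fin d) (Fin h) ℝ)
    (hW : P * SB * W = W) (hrank : W.rank = h) :
    SW * W = 0 ∧ SB * W ≠ 0 := by
  have hSW_SB : (SW + SB) * W = SB * W := by
    calc (SW + SB) * W = (SW + SB) * P * SB * W := by
          rw [Matrix.mul_assoc (SW + SB) P, Matrix.mul_assoc, hW]
      _ = SB * W := by rw [hP.add_mul_mul_eq_right hSW hSB]
  refine ⟨by rwa [Matrix.add_mul, add_eq_right] at hSW_SB, fun hSBW => ?_⟩
  have hW0 : W = 0 := by rw [← hW, Matrix.mul_assoc, hSBW, Matrix.mul_zero]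
  rw [hW0, rank_zero] at hrank
  omega
end

section
/- Let S_W, S_B be symmetric PSD matrices with S_T = S_W + S_B and let W satisfy S_T† S_B W = W. Then every column w of W lies in the null space of S_W, i.e., S_W W = 0. -/
open Matrix

/-!
Write `T = S_W + S_B`. Since both summands are positive semidefinite, `T v = 0` forces
`vᴴ S_B v = 0` and hence `S_B v = 0`; so the range of `S_B` lies in the range of `T`, on which
`T P` acts as the identity as soon as `T P T = T`. Thus `T P S_B = S_B`, and
`T W = T P S_B W = S_B W`, i.e. `S_W W = T W - S_B W = 0`.
-/

open scoped ComplexOrder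

namespace Matrix.PosSemidef

variable {𝕜 n : Type*} [RCLike 𝕜] [Fintype n] {A B : Matrix n n 𝕜}

theorem mulVec_eq_zero_of_add_mulVec_eq_zero_s12 (hA : A.PosSemidef) (hB : B.PosSemidef)
    {v : n → 𝕜} (h : (A + B) *ᵥ v = 0) : B *ᵥ v = 0 := by
  refine (hB.dotProduct_mulVec_zero_iff v).mp (le_antisymm ?_ (hB.dotProduct_mulVec_nonneg v))
  have hsum : star v ⬝ᵥ A *ᵥ v + star v ⬝ᵥ B *ᵥ v = 0 := by
    rw [← dotProduct_add, ← add_mulVec, h, dotProduct_zero]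
  calc star v ⬝ᵥ B *ᵥ v = -(star v ⬝ᵥ A *ᵥ v) := eq_neg_of_add_eq_zero_right hsum
    _ ≤ 0 := neg_nonpos.mpr (hA.dotProduct_mulVec_nonneg v)

theorem mul_eq_zero_of_add_mul_eq_zero_s12 {m : Type*} [Fintype m] (hA : A.PosSemidef)
    (hB : B.PosSemidef) {M : Matrix n m 𝕜} (h : (A + B) * M = 0) : B * M = 0 :=
  ext_iff_mulVec.mpr fun v => by
    rw [← mulVec_mulVec, zero_mulVec]
    exact hA.mulVec_eq_zero_of_add_mulVec_eq_zero_s12 hB (by rw [mulVec_mulVec, h, zero_mulVec])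

theorem add_mul_mul_eq_right [DecidableEq n] (hA : A.PosSemidef) (hB : B.PosSemidef)
    {P : Matrix n n 𝕜} (hP : (A + B) * P * (A + B) = A + B) : (A + B) * P * B = B := by
  set R := 1 - (A + B) * P
  have hRT : R * (A + B) = 0 := by rw [sub_mul, one_mul, hP, sub_self]
  have hTR : (A + B) * Rᴴ = 0 := by
    simpa [(hA.isHermitian.add hB.isHermitian).eq] using congrArg (·ᴴ) hRT
  have hRB : R * B = 0 := by
    simpa [hB.isHermitian.eq] using
      congrArg (·ᴴ) (hA.mul_eq_zero_of_add_mul_eq_zero_s12 hB hTR)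
  rw [sub_mul, one_mul, sub_eq_zero] at hRB
  exact hRB.symm

end Matrix.PosSemidef

theorem stmt12 {d h : ℕ}
    (SW SB : Matrix (Fin d) (Fin d) ℝ)
    (hSW : SW.PosSemidef) (hSB : SB.PosSemidef)
    (P : Matrix (Fin d) (Fin d) ℝ) (hP : IsMoorePenrose (SW + SB) P)
    (W : Matrix (Fin d) (Fin h) ℝ)
    (hW : P * SB * W = W) :
    SW * W = 0 := by
  have hTW : (SW + SB) * W = SB * W := by
    calc (SW + SB) * W = (SW + SB) * P * SB * W := by
          rw [Matrix.mul_assoc, Matrix.mul_assoc, ← Matrix.mul_assoc P, hW]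
      _ = SB * W := by rw [hSW.add_mul_mul_eq_right hSB hP.1]
  rwa [Matrix.add_mul, add_eq_right] at hTW
end

section
/- Let Q = Σ₁⁻¹ U₁ᵀ B where S_T, S_B = BBᵀ are the total and between-class scatter matrices of n linearly independent training vectors in c classes, S_T = U₁ Σ₁² U₁ᵀ with U₁ᵀU₁ = I and Σ₁ positive diagonal. Then the eigenvalues of Q Qᵀ ∈ ℝ^{(n−1)×(n−1)} are 1 with multiplicity c−1 and 0 with multiplicity n−c; i.e., QQᵀ is an orthogonal projection of rank c−1. -/
open Matrix Finset

/-!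
Let `H` be the centred data matrix, so that `S_T = H Hᵀ`, and let `E` be the class-indicator
matrix with columns scaled to unit length, so that `B = H E` and `Eᵀ E = 1`; then `Q = K E`
with `K = Σ₁⁻¹ U₁ᵀ H`. From `S_T = U₁ Σ₁² U₁ᵀ`, the symmetric matrix `Kᵀ K` satisfies
`H Kᵀ K = H` and kills `𝟙`; since linear independence makes `ker H` the constant vectors, this
forces `Kᵀ K = 1 - 𝟙𝟙ᵀ / n`, the centring projection. Hence
`Qᵀ Q = Eᵀ (1 - 𝟙𝟙ᵀ / n) E = 1 - w wᵀ / n` with `w = (√n_j)_j` and `|w|² = n`: the orthogonal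
projection of `ℝ^c` onto `w^⊥`, of rank `c - 1`. Finally `Q Qᵀ` is idempotent whenever `Qᵀ Q`
is, and the two have the same rank.
-/

namespace Matrix

variable {m n : Type*} [Fintype m] [Fintype n]

theorem mul_eq_self_of_mul_mul_transpose_eq_self {P : Matrix m m ℝ} {H : Matrix m n ℝ}
    (hP : Pᵀ = P) (hPH : P * (H * Hᵀ) = H * Hᵀ) : P * H = H := by
  have hHP : H * Hᵀ * P = H * Hᵀ := by
    simpa only [transpose_mul, transpose_transpose, hP] using congrArg transpose hPH
  have hzero : (P * H - H) * (P * H - H)ᴴ = 0 := by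
    rw [conjTranspose_eq_transpose_of_trivial, transpose_sub, transpose_mul, hP]
    simp only [Matrix.sub_mul, Matrix.mul_sub, Matrix.mul_assoc]
    rw [← Matrix.mul_assoc H Hᵀ P, hHP]
    abel
  exact sub_eq_zero.mp (self_mul_conjTranspose_eq_zero.mp hzero)

theorem isIdempotentElem_mul_transpose {Q : Matrix m n ℝ} (hQ : IsIdempotentElem (Qᵀ * Q)) :
    IsIdempotentElem (Q * Qᵀ) := by
  have hQtQ : Qᵀ * Q * Qᵀ = Qᵀ :=
    mul_eq_self_of_mul_mul_transpose_eq_self (by simp) (by simpa using hQ.eq)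
  rw [IsIdempotentElem, Matrix.mul_assoc, ← Matrix.mul_assoc Qᵀ, hQtQ]

theorem rank_eq_trace_of_isIdempotentElem {K : Type*} [Field K] [DecidableEq m]
    {A : Matrix m m K} (hA : IsIdempotentElem A) : (A.rank : K) = A.trace := by
  have hlin : IsIdempotentElem (toLin' A) := by
    rw [IsIdempotentElem, Module.End.mul_eq_comp, ← toLin'_mul, hA.eq]
  rw [← trace_toLin'_eq, (LinearMap.IsIdempotentElem.isProj_range _ hlin).trace]
  rfl

theorem isIdempotentElem_one_sub_smul_vecMulVec {K : Type*} [Field K] [DecidableEq m]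
    (w : m → K) : IsIdempotentElem (1 - (w ⬝ᵥ w)⁻¹ • vecMulVec w w) := by
  refine IsIdempotentElem.one_sub ?_
  rw [IsIdempotentElem, smul_mul_smul, vecMulVec_mul_vecMulVec, vecMulVec_smul, smul_smul,
    mul_assoc]
  grind

theorem rank_one_sub_smul_vecMulVec {K : Type*} [Field K] [CharZero K] [DecidableEq m]
    (w : m → K) (hw : w ⬝ᵥ w ≠ 0) :
    (1 - (w ⬝ᵥ w)⁻¹ • vecMulVec w w).rank = Fintype.card m - 1 := by
  have hcard : 0 < Fintype.card m := by
    obtain ⟨i, -, -⟩ := Finset.exists_ne_zero_of_sum_ne_zero hw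
    exact Fintype.card_pos_iff.mpr ⟨i⟩
  have htrace := rank_eq_trace_of_isIdempotentElem (isIdempotentElem_one_sub_smul_vecMulVec w)
  rw [trace_sub, trace_one, trace_smul, trace_vecMulVec, smul_eq_mul, inv_mul_cancel₀ hw,
    ← Nat.cast_pred hcard] at htrace
  exact_mod_cast htrace

theorem eq_one_sub_smul_vecMulVec_one {d ι : Type*} [Fintype ι] [DecidableEq ι]
    {H : Matrix d ι ℝ} (hker : ∀ v, H *ᵥ v = 0 → ∃ a, ∀ k, v k = a) {P : Matrix ι ι ℝ}
    (hP : Pᵀ = P) (hHP : H * P = H) (hP1 : P *ᵥ 1 = 0) :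
    P = 1 - (Fintype.card ι : ℝ)⁻¹ • vecMulVec 1 1 := by
  set R := 1 - P with hR
  have hHR : H * R = 0 := by rw [Matrix.mul_sub, Matrix.mul_one, hHP, sub_self]
  have hcol : ∀ j, ∃ a, ∀ k, R k j = a := fun j =>
    hker (fun k => R k j) (funext fun i => congrFun (congrFun hHR i) j)
  choose a ha using hcol
  have hsymm : ∀ j k, a j = a k := fun j k => by
    rw [← ha j k, ← ha k j, ← transpose_apply R, hR, transpose_sub, transpose_one, hP]
  have hR1 : R *ᵥ 1 = 1 := by rw [hR, sub_mulVec, one_mulVec, hP1, sub_zero]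
  have ha_eq : ∀ j, a j = (Fintype.card ι : ℝ)⁻¹ := fun j => by
    have hrow : ∑ k, R j k = 1 := by simpa [mulVec, dotProduct] using congrFun hR1 j
    simp only [ha, hsymm _ j, Finset.sum_const, Finset.card_univ, nsmul_eq_mul] at hrow
    exact eq_inv_of_mul_eq_one_right hrow
  rw [← sub_sub_cancel 1 P, ← hR]
  congr 1
  ext k j
  simp [ha, ha_eq]

theorem transpose_mul_self_eq_one_sub_smul_vecMulVec_one {d ι r : Type*} [Fintype d]
    [Fintype ι] [Fintype r] [DecidableEq ι] [DecidableEq r] {H : Matrix d ι ℝ}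
    (hker : ∀ v, H *ᵥ v = 0 → ∃ a, ∀ k, v k = a) (hH1 : H *ᵥ 1 = 0) {U : Matrix d r ℝ}
    {σ : r → ℝ} (hσ : ∀ i, σ i ≠ 0) (hU : Uᵀ * U = 1)
    (hHH : H * Hᵀ = U * diagonal (fun i => σ i ^ 2) * Uᵀ) :
    ((diagonal σ)⁻¹ * Uᵀ * H)ᵀ * ((diagonal σ)⁻¹ * Uᵀ * H)
      = 1 - (Fintype.card ι : ℝ)⁻¹ • vecMulVec 1 1 := by
  have hinv : (diagonal σ)⁻¹ = diagonal σ⁻¹ :=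
    inv_eq_left_inv (by simp [diagonal_mul_diagonal, hσ])
  have hUH : U * Uᵀ * H = H := by
    refine mul_eq_self_of_mul_mul_transpose_eq_self (by simp) ?_
    rw [hHH, Matrix.mul_assoc U Uᵀ, ← Matrix.mul_assoc Uᵀ, ← Matrix.mul_assoc Uᵀ, hU,
      Matrix.one_mul, Matrix.mul_assoc]
  have hσσ : diagonal (fun i => σ i ^ 2) * (diagonal σ⁻¹ * diagonal σ⁻¹) = 1 := by
    rw [diagonal_mul_diagonal, diagonal_mul_diagonal, ← diagonal_one]
    congr 1
    funext i
    simp only [Pi.inv_apply]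
    field_simp [hσ i]
  rw [hinv]
  refine eq_one_sub_smul_vecMulVec_one hker ?_ ?_ ?_
  · simp only [transpose_mul, transpose_transpose, diagonal_transpose, Matrix.mul_assoc]
  · calc H * ((diagonal σ⁻¹ * Uᵀ * H)ᵀ * (diagonal σ⁻¹ * Uᵀ * H))
        = U * (diagonal (fun i => σ i ^ 2) * (Uᵀ * U) * (diagonal σ⁻¹ * diagonal σ⁻¹)) *
            Uᵀ * H := by
          simp only [transpose_mul, diagonal_transpose, transpose_transpose,
            ← Matrix.mul_assoc, hHH]
      _ = H := by rw [hU, Matrix.mul_one, hσσ, Matrix.mul_one, hUH]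
  · simp only [← mulVec_mulVec, hH1, mulVec_zero]

end Matrix

section ScatterMatrices

variable {d n c : ℕ} (x : Fin n → Fin d → ℝ) (g : Fin n → Fin c)

noncomputable def centeredData : Matrix (Fin d) (Fin n) ℝ :=
  of fun i k => x k i - globalMean x i

theorem totalScatter_eq_centeredData_mul_transpose :
    totalScatter x = centeredData x * (centeredData x)ᵀ := by
  ext a b
  simp [totalScatter, centeredData, mul_apply, Matrix.sum_apply, vecMulVec_apply]

theorem centeredData_mulVec_one : centeredData x *ᵥ 1 = 0 := by
  ext i
  simp only [centeredData, globalMean, mulVec, dotProduct, of_apply, Pi.one_apply, mul_one,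
    Finset.sum_sub_distrib, Finset.sum_const, Finset.card_univ, Fintype.card_fin, nsmul_eq_mul,
    Pi.smul_apply, smul_eq_mul, Finset.sum_apply, Pi.zero_apply]
  obtain rfl | hn := eq_or_ne n 0
  · simp
  · field_simp
    ring

theorem exists_const_of_centeredData_mulVec_eq_zero (hli : LinearIndependent ℝ x)
    {v : Fin n → ℝ} (hv : centeredData x *ᵥ v = 0) : ∃ a, ∀ k, v k = a := by
  have hsum : ∑ k, v k • x k = (∑ k, v k) • globalMean x := by
    ext i
    have := congrFun hv i
    simp only [centeredData, mulVec, dotProduct, of_apply, Pi.zero_apply] at this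
    simp only [Finset.sum_apply, Pi.smul_apply, smul_eq_mul, Finset.sum_mul]
    rw [← sub_eq_zero, ← Finset.sum_sub_distrib, ← this]
    exact Finset.sum_congr rfl fun k _ => by ring
  refine ⟨(∑ k, v k) / n, fun k => sub_eq_zero.mp ?_⟩
  refine Fintype.linearIndependent_iff.mp hli (fun k => v k - (∑ l, v l) / n) ?_ k
  simp only [sub_smul, Finset.sum_sub_distrib, hsum, ← Finset.smul_sum, globalMean, smul_smul,
    div_eq_mul_inv, sub_self]

def classSize (j : Fin c) : ℕ := (univ.filter fun i => g i = j).card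

noncomputable def normalizedClassIndicator : Matrix (Fin n) (Fin c) ℝ :=
  of fun k j => if g k = j then (√(classSize g j))⁻¹ else 0

theorem centeredData_mul_normalizedClassIndicator :
    centeredData x * normalizedClassIndicator g =
      of fun i j => √(classSize g j) * (classMean x g j i - globalMean x i) := by
  ext i j
  simp only [centeredData, normalizedClassIndicator, classMean, mul_apply, of_apply, mul_ite,
    mul_zero, ← Finset.sum_filter, ← Finset.sum_mul, Finset.sum_sub_distrib, Finset.sum_const,
    nsmul_eq_mul, Pi.smul_apply, smul_eq_mul, Finset.sum_apply]
  change (_ - (classSize g j : ℝ) * _) * _ = _ * ((classSize g j : ℝ)⁻¹ * _ - _)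
  obtain h0 | hpos := (classSize g j).eq_zero_or_pos
  · have hempty : univ.filter (fun k => g k = j) = ∅ := Finset.card_eq_zero.mp h0
    simp [h0, hempty]
  · have hs : √(classSize g j : ℝ) ≠ 0 := by positivity
    field_simp
    rw [Real.sq_sqrt (Nat.cast_nonneg _)]
    ring

theorem normalizedClassIndicator_transpose_mul_self (hg : Function.Surjective g) :
    (normalizedClassIndicator g)ᵀ * normalizedClassIndicator g = 1 := by
  ext j l
  simp only [normalizedClassIndicator, mul_apply, transpose_apply, of_apply, ite_mul, zero_mul,
    mul_ite, mul_zero]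
  obtain rfl | hjl := eq_or_ne j l
  · obtain ⟨k, rfl⟩ := hg j
    have hpos : (0 : ℝ) < classSize g (g k) :=
      Nat.cast_pos.mpr (Finset.card_pos.mpr ⟨k, by simp⟩)
    simp only [← ite_and, and_self, ← Finset.sum_filter, Finset.sum_const, nsmul_eq_mul,
      one_apply_eq]
    change (classSize g (g k) : ℝ) * _ = 1
    field_simp
    exact (Real.sq_sqrt hpos.le).symm
  · rw [one_apply_ne hjl]
    refine Finset.sum_eq_zero fun k _ => ?_
    split_ifs with hl hj
    · exact absurd (hj.symm.trans hl) hjl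
    all_goals rfl

theorem normalizedClassIndicator_transpose_mulVec_one :
    (normalizedClassIndicator g)ᵀ *ᵥ 1 = fun j => √(classSize g j) := by
  ext j
  simp only [normalizedClassIndicator, mulVec, dotProduct, transpose_apply, of_apply,
    Pi.one_apply, mul_one, ← Finset.sum_filter, Finset.sum_const, nsmul_eq_mul]
  exact Real.div_sqrt

theorem sum_classSize : ∑ j, classSize g j = n := by
  simp only [classSize]
  rw [← Finset.card_eq_sum_card_fiberwise (fun k _ => Finset.mem_univ (g k)), Finset.card_univ,
    Fintype.card_fin]

theorem sqrt_classSize_dotProduct_self :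
    ((fun j => √(classSize g j)) ⬝ᵥ fun j => √(classSize g j)) = n := by
  simp only [dotProduct, Real.mul_self_sqrt (Nat.cast_nonneg _)]
  exact_mod_cast sum_classSize g

theorem normalizedClassIndicator_transpose_mul_centering_mul (hg : Function.Surjective g) :
    (normalizedClassIndicator g)ᵀ * (1 - (n : ℝ)⁻¹ • vecMulVec 1 1 : Matrix (Fin n) (Fin n) ℝ) *
        normalizedClassIndicator g
      = 1 - ((fun j => √(classSize g j)) ⬝ᵥ fun j => √(classSize g j))⁻¹ •
          vecMulVec (fun j => √(classSize g j)) fun j => √(classSize g j) := by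
  rw [sqrt_classSize_dotProduct_self, Matrix.mul_sub, Matrix.mul_one, Matrix.sub_mul,
    normalizedClassIndicator_transpose_mul_self g hg, Matrix.mul_smul, Matrix.smul_mul,
    mul_vecMulVec, vecMulVec_mul, ← mulVec_transpose, normalizedClassIndicator_transpose_mulVec_one]

end ScatterMatrices

theorem stmt14_general {d n c : ℕ} (x : Fin n → Fin d → ℝ) (g : Fin n → Fin c)
    (hli : LinearIndependent ℝ x)
    (hsurj : Function.Surjective g)
    (B : Matrix (Fin d) (Fin c) ℝ)
    (hB : B = Matrix.of fun i j =>
      Real.sqrt ((Finset.univ.filter (fun i' => g i' = j)).card) *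
        (classMean x g j i - globalMean x i))
    (U₁ : Matrix (Fin d) (Fin (n - 1)) ℝ)
    (σ : Fin (n - 1) → ℝ) (hσ : ∀ i, 0 < σ i)
    (hU₁ : U₁ᵀ * U₁ = 1)
    (hST : totalScatter x = U₁ * Matrix.diagonal (fun i => (σ i) ^ 2) * U₁ᵀ)
    (Q : Matrix (Fin (n - 1)) (Fin c) ℝ)
    (hQ : Q = (Matrix.diagonal σ)⁻¹ * U₁ᵀ * B) :
    (Q * Qᵀ) * (Q * Qᵀ) = Q * Qᵀ ∧ (Q * Qᵀ)ᵀ = Q * Qᵀ ∧ (Q * Qᵀ).rank = c - 1 := by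
  have hKK := transpose_mul_self_eq_one_sub_smul_vecMulVec_one
    (fun v => exists_const_of_centeredData_mulVec_eq_zero x hli) (centeredData_mulVec_one x)
    (fun i => (hσ i).ne') hU₁ (by rw [← totalScatter_eq_centeredData_mul_transpose, hST])
  rw [Fintype.card_fin] at hKK
  have hB' : B = centeredData x * normalizedClassIndicator g :=
    hB.trans (centeredData_mul_normalizedClassIndicator x g).symm
  set w : Fin c → ℝ := fun j => √(classSize g j)
  have hQtQ : Qᵀ * Q = 1 - (w ⬝ᵥ w)⁻¹ • vecMulVec w w := by
    rw [← normalizedClassIndicator_transpose_mul_centering_mul g hsurj, ← hKK, hQ, hB']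
    simp only [transpose_mul, Matrix.mul_assoc]
  have hidem : IsIdempotentElem (Q * Qᵀ) :=
    isIdempotentElem_mul_transpose (hQtQ ▸ isIdempotentElem_one_sub_smul_vecMulVec w)
  refine ⟨hidem.eq, by rw [transpose_mul, transpose_transpose], ?_⟩
  rw [rank_self_mul_transpose, ← rank_transpose_mul_self, hQtQ]
  obtain rfl | hn := eq_or_ne n 0
  · obtain rfl : c = 0 := by simpa using Fintype.card_le_of_surjective g hsurj
    simp
  · rw [rank_one_sub_smul_vecMulVec, Fintype.card_fin]
    rwa [sqrt_classSize_dotProduct_self, Nat.cast_ne_zero]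

theorem stmt14 {d n c : ℕ} (hdn : n ≤ d) (x : Fin n → Fin d → ℝ) (g : Fin n → Fin c)
    (hli : LinearIndependent ℝ x)
    (hsurj : Function.Surjective g)
    (B : Matrix (Fin d) (Fin c) ℝ)
    (hB : B = Matrix.of fun i j =>
      Real.sqrt ((Finset.univ.filter (fun i' => g i' = j)).card) *
        (classMean x g j i - globalMean x i))
    (U₁ : Matrix (Fin d) (Fin (n - 1)) ℝ)
    (σ : Fin (n - 1) → ℝ) (hσ : ∀ i, 0 < σ i)
    (hU₁ : U₁ᵀ * U₁ = 1)
    (hST : totalScatter x = U₁ * Matrix.diagonal (fun i => (σ i) ^ 2) * U₁ᵀ)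
    (Q : Matrix (Fin (n - 1)) (Fin c) ℝ)
    (hQ : Q = (Matrix.diagonal σ)⁻¹ * U₁ᵀ * B) :
    (Q * Qᵀ) * (Q * Qᵀ) = Q * Qᵀ ∧ (Q * Qᵀ)ᵀ = Q * Qᵀ ∧ (Q * Qᵀ).rank = c - 1 :=
  stmt14_general x g hli hsurj B hB U₁ σ hσ hU₁ hST Q hQ
end
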